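/- arXiv:2602.14500 — 2 statements merged into one kernel-verified Lean document; each statement's English description precedes it below -/
import Mathlib

section
/- For every connected graph G of order n and every k ≥ 0, ⌈n/μ_k(G)⌉ ≤ τ_k(G) ≤ 1 + ⌈(n − μ_k(G))/(k+2)⌉. -/
open scoped Classical

variable {V : Type*}

/-- The number of internal vertices of a walk `p` that lie in `X`. -/
noncomputable def internalCount {G : SimpleGraph V} {u v : V}
    (p : G.Walk u v) (X : Finset V) : ℕ :=
  p.support.tail.dropLast.countP (fun x => decide (x ∈ X))

/-- `X` is a mutual `k`-visible set in `G`: every pair of distinct vertices of `X`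
admits a shortest path with at most `k` internal vertices in `X`. -/
def MutVis (G : SimpleGraph V) (X : Finset V) (k : ℕ) : Prop :=
  ∀ u ∈ X, ∀ v ∈ X, u ≠ v → ∃ p : G.Walk u v, p.IsPath ∧ p.length = G.dist u v ∧
    internalCount p X ≤ k

/-- The mutual `k`-visibility number of `G`. -/
noncomputable def muK [Fintype V] (G : SimpleGraph V) (k : ℕ) : ℕ :=
  sSup {n | ∃ X : Finset V, MutVis G X k ∧ X.card = n}

/-- The mutual `k`-visibility covering number: the minimum number of parts in a
partition of `V(G)` into mutual `k`-visible sets. -/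
noncomputable def tauK [Fintype V] (G : SimpleGraph V) (k : ℕ) : ℕ :=
  sInf {n | ∃ P : Finpartition (Finset.univ : Finset V),
    (∀ X ∈ P.parts, MutVis G X k) ∧ P.parts.card = n}

/-!
A partition into mutual `k`-visible sets has parts of size at most `μ_k`, which gives the lower
bound. For the upper bound, take a maximum mutual `k`-visible set `X` and cut the remaining
`n - μ_k` vertices into blocks of at most `k + 2` vertices. Any set `Y` with `|Y| ≤ k + 2` is
mutual `k`-visible: a shortest path between two vertices of `Y` contains both of them, so at most
`k` of its internal vertices lie in `Y`.
-/

open Finset SimpleGraph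

namespace SimpleGraph.Walk

variable {G : SimpleGraph V} {u v : V}

lemma countP_support_eq_internalCount_add_two (p : G.Walk u v) {X : Finset V}
    (huv : u ≠ v) (hu : u ∈ X) (hv : v ∈ X) :
    p.support.countP (· ∈ X) = internalCount p X + 2 := by
  have htail : p.support.tail ≠ [] := by
    refine List.ne_nil_of_length_pos ?_
    have : p.length ≠ 0 := fun h => huv (eq_of_length_eq_zero h)
    simp only [List.length_tail, length_support]
    omega
  have hsupp : p.support = u :: (p.support.tail.dropLast ++ [v]) := by
    conv_lhs => rw [← cons_tail_support, ← List.dropLast_append_getLast htail]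
    simp [List.getLast_tail, getLast_support]
  rw [hsupp, internalCount]
  simp [hu, hv]

lemma IsPath.countP_support_le_card {p : G.Walk u v} (hp : p.IsPath) (X : Finset V) :
    p.support.countP (· ∈ X) ≤ #X := by
  rw [← hp.support_nodup.card_eq_countP]
  exact card_le_card fun x hx => (mem_filter.1 hx).2

end SimpleGraph.Walk

lemma Finpartition.exists_card_parts_le_ceilDiv {α : Type*} [DecidableEq α] (s : Finset α)
    {m : ℕ} (hm : 0 < m) :
    ∃ P : Finpartition s, (∀ t ∈ P.parts, #t ≤ m) ∧ #P.parts ≤ (#s + m - 1) / m := by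
  induction s using Finset.strongInduction with
  | H s ih =>
    rcases s.eq_empty_or_nonempty with rfl | hs
    · exact ⟨⊥, by simp, by simp⟩
    by_cases hsm : #s ≤ m
    · refine ⟨Finpartition.indiscrete hs.ne_empty, by simpa using hsm, ?_⟩
      rw [Finpartition.indiscrete_parts, card_singleton, Nat.le_div_iff_mul_le hm]
      have := hs.card_pos
      omega
    obtain ⟨t, hts, htm⟩ := exists_subset_card_eq (s := s) (n := m) (by omega)
    have ht : t ≠ ∅ := (card_pos.1 (htm ▸ hm)).ne_empty
    obtain ⟨P, hPm, hPcard⟩ := ih (s \ t) (sdiff_ssubset hts (nonempty_iff_ne_empty.2 ht))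
    refine ⟨P.extend ht sdiff_disjoint (sdiff_union_of_subset hts), ?_, ?_⟩
    · simp only [Finpartition.extend_parts, mem_insert, forall_eq_or_imp]
      exact ⟨htm.le, hPm⟩
    · rw [card_sdiff_of_subset hts, htm, Nat.le_div_iff_mul_le hm] at hPcard
      rw [P.card_extend, Nat.le_div_iff_mul_le hm, add_mul, one_mul]
      omega

section

variable {G : SimpleGraph V} {k : ℕ}

lemma mutVis_of_card_le_one {X : Finset V} (hX : #X ≤ 1) : MutVis G X k :=
  fun _ hu _ hv huv => absurd (card_le_one.1 hX _ hu _ hv) huv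

lemma mutVis_of_card_le_add_two (hG : G.Connected) {X : Finset V} (hX : #X ≤ k + 2) :
    MutVis G X k := by
  intro u hu v hv huv
  obtain ⟨p, hp, hlen⟩ := hG.exists_path_of_dist u v
  refine ⟨p, hp, hlen, ?_⟩
  have := p.countP_support_eq_internalCount_add_two huv hu hv
  have := hp.countP_support_le_card X
  omega

variable [Fintype V]

lemma bddAbove_setOf_mutVis_card (G : SimpleGraph V) (k : ℕ) :
    BddAbove {n | ∃ X : Finset V, MutVis G X k ∧ #X = n} :=
  ⟨Fintype.card V, by rintro _ ⟨X, -, rfl⟩; exact X.card_le_univ⟩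

lemma card_le_muK {X : Finset V} (hX : MutVis G X k) : #X ≤ muK G k :=
  le_csSup (bddAbove_setOf_mutVis_card G k) ⟨X, hX, rfl⟩

lemma exists_mutVis_card_eq_muK (G : SimpleGraph V) (k : ℕ) :
    ∃ X : Finset V, MutVis G X k ∧ #X = muK G k :=
  Nat.sSup_mem (s := {n | ∃ X : Finset V, MutVis G X k ∧ #X = n})
    ⟨0, ∅, mutVis_of_card_le_one (by simp), rfl⟩ (bddAbove_setOf_mutVis_card G k)

lemma one_le_muK [Nonempty V] (G : SimpleGraph V) (k : ℕ) : 1 ≤ muK G k := by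
  obtain ⟨v⟩ := ‹Nonempty V›
  simpa using card_le_muK (G := G) (k := k) (X := {v}) (mutVis_of_card_le_one (by simp))

lemma tauK_le_card_parts (P : Finpartition (univ : Finset V))
    (hP : ∀ X ∈ P.parts, MutVis G X k) : tauK G k ≤ #P.parts := by
  unfold tauK
  apply Nat.sInf_le
  exact ⟨P, hP, rfl⟩

lemma exists_finpartition_card_parts_eq_tauK (G : SimpleGraph V) (k : ℕ) :
    ∃ P : Finpartition (univ : Finset V),
      (∀ X ∈ P.parts, MutVis G X k) ∧ #P.parts = tauK G k :=
  Nat.sInf_mem (s := {n | ∃ P : Finpartition (univ : Finset V),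
      (∀ X ∈ P.parts, MutVis G X k) ∧ #P.parts = n})
    ⟨_, ⊥, fun _ hX => by
      obtain ⟨v, -, rfl⟩ := Finpartition.mem_bot_iff.1 hX
      exact mutVis_of_card_le_one (card_singleton v).le, rfl⟩

lemma card_le_tauK_mul_muK (G : SimpleGraph V) (k : ℕ) :
    Fintype.card V ≤ tauK G k * muK G k := by
  obtain ⟨P, hP, hPcard⟩ := exists_finpartition_card_parts_eq_tauK G k
  calc Fintype.card V = ∑ X ∈ P.parts, #X := by rw [P.sum_card_parts, card_univ]
    _ ≤ #P.parts • muK G k := sum_le_card_nsmul _ _ _ fun X hX => card_le_muK (hP X hX)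
    _ = tauK G k * muK G k := by rw [hPcard, smul_eq_mul]

lemma tauK_le_one_add (hG : G.Connected) :
    tauK G k ≤ 1 + (Fintype.card V - muK G k + k + 1) / (k + 2) := by
  have := hG.nonempty
  obtain ⟨X, hX, hXcard⟩ := exists_mutVis_card_eq_muK G k
  have hXne : X ≠ ∅ := by rintro rfl; have := one_le_muK G k; simp at hXcard; omega
  obtain ⟨P, hPsmall, hPcard⟩ :=
    Finpartition.exists_card_parts_le_ceilDiv Xᶜ (m := k + 2) (by omega)
  let Q := P.extend hXne disjoint_compl_left compl_sup_eq_top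
  have hQ : ∀ Y ∈ Q.parts, MutVis G Y k := by
    simp only [Q, Finpartition.extend_parts, mem_insert, forall_eq_or_imp]
    exact ⟨hX, fun Y hY => mutVis_of_card_le_add_two hG (hPsmall Y hY)⟩
  calc tauK G k ≤ #Q.parts := tauK_le_card_parts Q hQ
    _ = 1 + #P.parts := by rw [P.card_extend, add_comm]
    _ ≤ 1 + (Fintype.card V - muK G k + k + 1) / (k + 2) := by
      rw [card_compl, hXcard, show Fintype.card V - muK G k + (k + 2) - 1 =
        Fintype.card V - muK G k + k + 1 by omega] at hPcard
      omega

end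

theorem stmt16 [Fintype V] (G : SimpleGraph V) (hG : G.Connected) (k : ℕ) :
    (Fintype.card V + muK G k - 1) / muK G k ≤ tauK G k ∧
    tauK G k ≤ 1 + (Fintype.card V - muK G k + k + 1) / (k + 2) := by
  have := hG.nonempty
  refine ⟨?_, tauK_le_one_add hG⟩
  rw [Nat.div_le_iff_le_mul_add_pred (one_le_muK G k)]
  have := card_le_tauK_mul_muK G k
  rw [mul_comm] at this
  omega
end

section
/- For the path P_n on n ≥ 1 vertices and any k ≥ 0, τ_k(P_n) = ⌈n/(k+2)⌉. -/
open scoped Classical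

variable {V : Type*}

/-!
A set `X` of vertices of a connected graph with `#X ≤ k + 2` is always mutual `k`-visible: a
shortest path between two of its vertices has at most `#X - 2` internal vertices in `X`.
In the path `P_n` the converse holds, since every walk from `min X` to `max X` passes through
all of `X`. So the mutual `k`-visible sets of `P_n` are exactly the sets of size at most `k + 2`,
and the minimum number of such sets partitioning `n` vertices is `⌈n / (k + 2)⌉`; an
equipartition into that many parts attains it.
-/

open Finset SimpleGraph

namespace List

variable {α : Type*}

lemma card_le_countP_mem {l : List α} {X : Finset α} (h : ∀ x ∈ X, x ∈ l) :
    #X ≤ l.countP (fun x => decide (x ∈ X)) := by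
  rw [countP_eq_length_filter, ← Finset.length_toList]
  exact ((Finset.nodup_toList X).subperm fun x hx =>
    mem_filter.2 ⟨h x (Finset.mem_toList.1 hx), by simpa using hx⟩).length_le

lemma Nodup.countP_mem_le_card {l : List α} (hl : l.Nodup) (X : Finset α) :
    l.countP (fun x => decide (x ∈ X)) ≤ #X := by
  rw [countP_eq_length_filter, ← Finset.length_toList]
  exact ((hl.filter _).subperm fun x hx =>
    Finset.mem_toList.2 (by simpa using (mem_filter.1 hx).2)).length_le

end List

section Walk

variable {G : SimpleGraph V} {u v : V}

lemma SimpleGraph.Walk.support_eq_cons_dropLast_concat (p : G.Walk u v) (huv : u ≠ v) :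
    p.support = u :: (p.support.tail.dropLast ++ [v]) := by
  have hne : p.support.tail ≠ [] := List.ne_nil_of_mem (p.end_mem_tail_support_of_ne huv)
  conv_lhs => rw [← p.cons_tail_support, ← List.dropLast_concat_getLast hne,
    List.getLast_tail, p.getLast_support]

lemma internalCount_add_two (p : G.Walk u v) {X : Finset V} (hu : u ∈ X) (hv : v ∈ X)
    (huv : u ≠ v) : internalCount p X + 2 = p.support.countP (fun x => decide (x ∈ X)) := by
  rw [p.support_eq_cons_dropLast_concat huv, List.countP_cons, List.countP_append]
  simp [internalCount, hu, hv]

lemma SimpleGraph.Walk.IsPath.internalCount_le {p : G.Walk u v} (hp : p.IsPath) {X : Finset V}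
    (hu : u ∈ X) (hv : v ∈ X) (huv : u ≠ v) : internalCount p X ≤ #X - 2 := by
  have hcount := hp.support_nodup.countP_mem_le_card X
  have := internalCount_add_two p hu hv huv
  omega

lemma SimpleGraph.Preconnected.mutVis_of_card_le (hG : G.Preconnected) {X : Finset V} {k : ℕ}
    (hX : #X ≤ k + 2) : MutVis G X k := by
  intro u hu v hv huv
  obtain ⟨p, hp, hlen⟩ := (hG u v).exists_path_of_dist
  exact ⟨p, hp, hlen, (hp.internalCount_le hu hv huv).trans (by omega)⟩

end Walk

section PathGraph

variable {n : ℕ}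

lemma SimpleGraph.Walk.mem_support_pathGraph_of_le_of_le {u v w : Fin n} (p : (pathGraph n).Walk u v)
    (huw : u ≤ w) (hwv : w ≤ v) : w ∈ p.support := by
  induction p with
  | nil => simp [le_antisymm hwv huw]
  | cons h q ih =>
    rcases eq_or_lt_of_le huw with rfl | hlt
    · simp
    · rw [pathGraph_adj] at h
      rw [Fin.lt_def] at hlt
      exact List.mem_cons_of_mem _ (ih (by rw [Fin.le_def]; omega) hwv)

lemma card_le_of_mutVis_pathGraph {k : ℕ} {X : Finset (Fin n)}
    (h : MutVis (pathGraph n) X k) : #X ≤ k + 2 := by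
  by_contra! hcard
  have hX : X.Nonempty := card_pos.1 (by omega)
  have hne : X.min' hX ≠ X.max' hX := (X.min'_lt_max'_of_card (by omega)).ne
  obtain ⟨p, -, -, hp⟩ := h _ (X.min'_mem hX) _ (X.max'_mem hX) hne
  have hcover := List.card_le_countP_mem fun x hx =>
    p.mem_support_pathGraph_of_le_of_le (X.min'_le x hx) (X.le_max' x hx)
  have := internalCount_add_two p (X.min'_mem hX) (X.max'_mem hX) hne
  omega

lemma mutVis_pathGraph_iff {k : ℕ} (X : Finset (Fin n)) :
    MutVis (pathGraph n) X k ↔ #X ≤ k + 2 :=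
  ⟨card_le_of_mutVis_pathGraph, (pathGraph_preconnected n).mutVis_of_card_le⟩

end PathGraph

namespace Finpartition

variable {α : Type*} [DecidableEq α] {s : Finset α} {c : ℕ}

lemma card_le_mul_card_parts (P : Finpartition s) (h : ∀ t ∈ P.parts, #t ≤ c) :
    #s ≤ #P.parts * c := by
  rw [← P.sum_card_parts]
  simpa using sum_le_card_nsmul _ _ _ h

lemma IsEquipartition.card_part_le {P : Finpartition s} (hP : P.IsEquipartition)
    (hs : #s ≤ #P.parts * c) {t : Finset α} (ht : t ∈ P.parts) : #t ≤ c := by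
  by_contra! hct
  have hlt : ∑ _ ∈ P.parts, c < ∑ u ∈ P.parts, #u :=
    sum_lt_sum (fun u hu => by have := hP ht hu; omega) ⟨t, ht, hct⟩
  rw [sum_const, smul_eq_mul, P.sum_card_parts] at hlt
  omega

lemma exists_card_part_le_card_parts_eq_ceilDiv (s : Finset α) (hc : 0 < c) :
    ∃ P : Finpartition s, (∀ t ∈ P.parts, #t ≤ c) ∧ #P.parts = #s ⌈/⌉ c := by
  rcases s.eq_empty_or_nonempty with rfl | hs
  · exact ⟨⊥, by simp, by simp⟩
  have hpos : #s ⌈/⌉ c ≠ 0 := by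
    intro h0
    have := le_smul_ceilDiv (b := #s) hc
    rw [h0, smul_zero, nonpos_iff_eq_zero, card_eq_zero] at this
    exact hs.ne_empty this
  have hle : #s ⌈/⌉ c ≤ #s := (ceilDiv_le_iff_le_smul hc).2 (Nat.le_mul_of_pos_left _ hc)
  obtain ⟨P, hP, hcard⟩ := exists_equipartition_card_eq s hpos hle
  have hs : #s ≤ #P.parts * c := by rw [hcard, mul_comm]; exact le_smul_ceilDiv hc
  exact ⟨P, fun t ht => hP.card_part_le hs ht, hcard⟩

end Finpartition

theorem tauK_eq_ceilDiv_of_mutVis_iff [Fintype V] {G : SimpleGraph V} {k c : ℕ}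
    (hc : 0 < c) (h : ∀ X : Finset V, MutVis G X k ↔ #X ≤ c) :
    tauK G k = Fintype.card V ⌈/⌉ c := by
  obtain ⟨P, hP, hcard⟩ := Finpartition.exists_card_part_le_card_parts_eq_ceilDiv (univ : Finset V) hc
  have hP_mem : Fintype.card V ⌈/⌉ c ∈ {m | ∃ P : Finpartition (univ : Finset V),
      (∀ X ∈ P.parts, MutVis G X k) ∧ #P.parts = m} :=
    ⟨P, fun X hX => (h X).2 (hP X hX), by rw [hcard, card_univ]⟩
  refine le_antisymm (Nat.sInf_le hP_mem) (le_csInf ⟨_, hP_mem⟩ ?_)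
  rintro m ⟨Q, hQ, rfl⟩
  rw [ceilDiv_le_iff_le_smul hc, ← card_univ, smul_eq_mul, mul_comm]
  exact Q.card_le_mul_card_parts fun X hX => (h X).1 (hQ X hX)

theorem stmt18_general (n k : ℕ) :
    tauK (SimpleGraph.pathGraph n) k = (n + k + 1) / (k + 2) := by
  rw [tauK_eq_ceilDiv_of_mutVis_iff (c := k + 2) (by omega) mutVis_pathGraph_iff,
    Fintype.card_fin, Nat.ceilDiv_eq_add_pred_div]
  congr 1

theorem stmt18 (n k : ℕ) (hn : 1 ≤ n) :
    tauK (SimpleGraph.pathGraph n) k = (n + k + 1) / (k + 2) :=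
  stmt18_general n k
end
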